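/- In a two-player finite discounted stochastic game, a bi-policy π is an adversarial equilibrium (a Nash equilibrium in which, additionally, no player is hurt by any unilateral deviation of the opponent) if and only if the following four families of linear inequalities in the reward vectors hold: (B_{π|a_1} − B_π) D_π r_1 ≤ 0 for all a_1 ∈ A_1; (B_{π|a_2} − B_π) D_π r_2 ≤ 0 for all a_2 ∈ A_2; (B_{π|a_1} − B_π) D_π r_2 ≥ 0 for all a_1 ∈ A_1; and (B_{π|a_2} − B_π) D_π r_1 ≥ 0 for all a_2 ∈ A_2. -/

import Mathlib

/-!
Write `M = 1 - γ • G_π`. Since `G_π = B_π P` is row-stochastic, `‖γ • G_π‖_∞ < 1`, so `M` is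
invertible and `V = M⁻¹ B_π r` is the value. Then `D_π r = r + γ P V = Q`, and the push-through
identity `B_π D_π = M⁻¹ B_π` gives `B_π D_π r = V`. Hence `((B_{π|a} - B_π) D_π r)(s)` is the
opponent-averaged `Q`-value of the fixed action `a` at `s` minus `V(s)`, and each of the four
families of inequalities is exactly one of the four equilibrium conditions.
-/

open Matrix

section LinftyOpNorm

attribute [local instance] Matrix.linftyOpNormedRing Matrix.linftyOpNormedAlgebra

theorem isUnit_one_sub_smul_of_mem_rowStochastic {n : Type*} [Fintype n] [DecidableEq n]
    {G : Matrix n n ℝ} (hG : G ∈ rowStochastic ℝ n) {γ : ℝ} (hγ : |γ| < 1) :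
    IsUnit (1 - γ • G) := by
  have hG_norm : ‖G‖ ≤ 1 := by
    rw [linfty_opNorm_def, NNReal.coe_le_one]
    refine Finset.sup_le fun i _ => ?_
    rw [← NNReal.coe_le_one, NNReal.coe_sum]
    simp only [coe_nnnorm, Real.norm_of_nonneg (nonneg_of_mem_rowStochastic hG),
      sum_row_of_mem_rowStochastic hG i, le_refl]
  apply isUnit_one_sub_of_norm_lt_one
  calc ‖γ • G‖ ≤ ‖γ‖ * ‖G‖ := norm_smul_le γ G
    _ ≤ ‖γ‖ * 1 := by gcongr
    _ < 1 := by simpa using hγ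

end LinftyOpNorm

section PushThrough

variable {m n R : Type*} [Fintype m] [Fintype n] [DecidableEq m] [DecidableEq n] [CommRing R]

theorem mul_one_add_smul_mul_nonsing_inv_mul (B : Matrix m n R) (P : Matrix n m R) (γ : R)
    (h : IsUnit (1 - γ • (B * P)).det) :
    B * (1 + γ • (P * (1 - γ • (B * P))⁻¹ * B)) = (1 - γ • (B * P))⁻¹ * B := by
  set M := 1 - γ • (B * P)
  calc B * (1 + γ • (P * M⁻¹ * B)) = B + (1 - M) * M⁻¹ * B := by
        simp only [M, Matrix.mul_add, Matrix.mul_one, Matrix.mul_smul, Matrix.smul_mul,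
          sub_sub_cancel, Matrix.mul_assoc]
    _ = M⁻¹ * B := by
        rw [Matrix.sub_mul, Matrix.one_mul, mul_nonsing_inv M h, Matrix.sub_mul, Matrix.one_mul]
        abel

theorem sub_mul_mulVec_eq_mulVec_sub {B Ba : Matrix m n R} {P : Matrix n m R} {γ : R}
    {D : Matrix n n R} {r Q : n → R} {V : m → R}
    (hM : IsUnit (1 - γ • (B * P)).det)
    (hD : D = 1 + γ • (P * (1 - γ • (B * P))⁻¹ * B))
    (hV : V = (1 - γ • (B * P))⁻¹ *ᵥ (B *ᵥ r))
    (hQ : Q = r + γ • P *ᵥ V) :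
    ((Ba - B) * D) *ᵥ r = Ba *ᵥ Q - V := by
  have hDr : D *ᵥ r = Q := by
    rw [hD, hQ, hV, add_mulVec, one_mulVec, smul_mulVec, mulVec_mulVec, mulVec_mulVec,
      Matrix.mul_assoc]
  rw [Matrix.sub_mul, sub_mulVec, ← mulVec_mulVec, hDr, hD,
    mul_one_add_smul_mul_nonsing_inv_mul B P γ hM, ← mulVec_mulVec, hV]

end PushThrough

namespace StochasticGame

variable {S A1 A2 : Type*} [Fintype S] [Fintype A1] [Fintype A2] [DecidableEq S]

-- `B_π`, `B_{π|a1}`, `B_{π|a2}` and `G_π` of the paper.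
def expectedReward (π1 : S → A1 → ℝ) (π2 : S → A2 → ℝ) : Matrix S (S × A1 × A2) ℝ :=
  of fun s x => if x.1 = s then π1 s x.2.1 * π2 s x.2.2 else 0

def expectedRewardFst [DecidableEq A1] (π2 : S → A2 → ℝ) (a1 : A1) :
    Matrix S (S × A1 × A2) ℝ :=
  of fun s x => if x.1 = s ∧ x.2.1 = a1 then π2 s x.2.2 else 0

def expectedRewardSnd [DecidableEq A2] (π1 : S → A1 → ℝ) (a2 : A2) :
    Matrix S (S × A1 × A2) ℝ :=
  of fun s x => if x.1 = s ∧ x.2.2 = a2 then π1 s x.2.1 else 0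

def stateTransition (π1 : S → A1 → ℝ) (π2 : S → A2 → ℝ) (p : S × A1 × A2 → S → ℝ) :
    Matrix S S ℝ :=
  of fun s s' => ∑ a1, ∑ a2, π1 s a1 * π2 s a2 * p (s, a1, a2) s'

theorem expectedReward_mul_of (π1 : S → A1 → ℝ) (π2 : S → A2 → ℝ)
    (p : S × A1 × A2 → S → ℝ) :
    expectedReward π1 π2 * of p = stateTransition π1 π2 p := by
  ext s s'
  simp [expectedReward, stateTransition, mul_apply, Fintype.sum_prod_type]

theorem stateTransition_mem_rowStochastic {π1 : S → A1 → ℝ} {π2 : S → A2 → ℝ}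
    {p : S × A1 × A2 → S → ℝ} (hp0 : ∀ sa s', 0 ≤ p sa s') (hp1 : ∀ sa, ∑ s', p sa s' = 1)
    (hπ10 : ∀ s a, 0 ≤ π1 s a) (hπ11 : ∀ s, ∑ a, π1 s a = 1)
    (hπ20 : ∀ s a, 0 ≤ π2 s a) (hπ21 : ∀ s, ∑ a, π2 s a = 1) :
    stateTransition π1 π2 p ∈ rowStochastic ℝ S := by
  refine mem_rowStochastic_iff_sum.2 ⟨fun s s' => ?_, fun s => ?_⟩
  · exact Finset.sum_nonneg fun a1 _ => Finset.sum_nonneg fun a2 _ =>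
      mul_nonneg (mul_nonneg (hπ10 s a1) (hπ20 s a2)) (hp0 _ _)
  · simp only [stateTransition, of_apply]
    rw [Finset.sum_comm]
    simp_rw [Finset.sum_comm (γ := S), ← Finset.mul_sum, hp1, mul_one, ← Finset.mul_sum, hπ21,
      mul_one, hπ11]

theorem expectedRewardFst_mulVec_apply [DecidableEq A1] (π2 : S → A2 → ℝ) (a1 : A1)
    (Q : S × A1 × A2 → ℝ) (s : S) :
    (expectedRewardFst π2 a1 *ᵥ Q) s = ∑ a2, π2 s a2 * Q (s, a1, a2) := by
  simp [expectedRewardFst, mulVec, dotProduct, Fintype.sum_prod_type, ite_and]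

theorem expectedRewardSnd_mulVec_apply [DecidableEq A2] (π1 : S → A1 → ℝ) (a2 : A2)
    (Q : S × A1 × A2 → ℝ) (s : S) :
    (expectedRewardSnd π1 a2 *ᵥ Q) s = ∑ a1, π1 s a1 * Q (s, a1, a2) := by
  simp [expectedRewardSnd, mulVec, dotProduct, Fintype.sum_prod_type, ite_and]

end StochasticGame

open StochasticGame

/-- In a two-player finite discounted stochastic game, a
bi-policy `π` is an adversarial equilibrium (a Nash equilibrium in which,
additionally, no player is hurt by any unilateral deviation of the opponent:
`[Q_2^π(s)]ᵀ π_1(s) ≤ V_2^π(s)·1`, `Q_1^π(s) π_2(s) ≤ V_1^π(s)·1`,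
`[Q_1^π(s)]ᵀ π_1(s) ≥ V_1^π(s)·1`, `Q_2^π(s) π_2(s) ≥ V_2^π(s)·1`) if and only
if the four families of linear inequalities
`(B_{π|a_1} − B_π) D_π r_1 ≤ 0`, `(B_{π|a_2} − B_π) D_π r_2 ≤ 0`,
`(B_{π|a_1} − B_π) D_π r_2 ≥ 0`, `(B_{π|a_2} − B_π) D_π r_1 ≥ 0` hold. -/
theorem stmt5 {S A1 A2 : Type*} [Fintype S] [Fintype A1] [Fintype A2]
    [DecidableEq S] [DecidableEq A1] [DecidableEq A2]
    (γ : ℝ) (hγ0 : 0 ≤ γ) (hγ1 : γ < 1)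
    (p : S × A1 × A2 → S → ℝ)
    (hp0 : ∀ sa s', 0 ≤ p sa s') (hp1 : ∀ sa, ∑ s', p sa s' = 1)
    (π1 : S → A1 → ℝ) (π2 : S → A2 → ℝ)
    (hπ10 : ∀ s a, 0 ≤ π1 s a) (hπ11 : ∀ s, ∑ a, π1 s a = 1)
    (hπ20 : ∀ s a, 0 ≤ π2 s a) (hπ21 : ∀ s, ∑ a, π2 s a = 1)
    (r1 r2 : S × A1 × A2 → ℝ)
    (Gπ : Matrix S S ℝ)
    (hG : Gπ = Matrix.of fun s s' => ∑ a1, ∑ a2, π1 s a1 * π2 s a2 * p (s, a1, a2) s')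
    (Bπ : Matrix S (S × A1 × A2) ℝ)
    (hB : Bπ = Matrix.of fun s x => if x.1 = s then π1 s x.2.1 * π2 s x.2.2 else 0)
    (Bπa1 : A1 → Matrix S (S × A1 × A2) ℝ)
    (hBa1 : ∀ a1, Bπa1 a1 =
      Matrix.of fun s x => if x.1 = s ∧ x.2.1 = a1 then π2 s x.2.2 else 0)
    (Bπa2 : A2 → Matrix S (S × A1 × A2) ℝ)
    (hBa2 : ∀ a2, Bπa2 a2 =
      Matrix.of fun s x => if x.1 = s ∧ x.2.2 = a2 then π1 s x.2.1 else 0)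
    (P : Matrix (S × A1 × A2) S ℝ)
    (hP : P = Matrix.of fun sa s' => p sa s')
    (V1 V2 : S → ℝ)
    (hV1 : V1 = (1 - γ • Gπ)⁻¹ *ᵥ (Bπ *ᵥ r1))
    (hV2 : V2 = (1 - γ • Gπ)⁻¹ *ᵥ (Bπ *ᵥ r2))
    (Q1 Q2 : S × A1 × A2 → ℝ)
    (hQ1 : ∀ sa, Q1 sa = r1 sa + γ * ∑ s', p sa s' * V1 s')
    (hQ2 : ∀ sa, Q2 sa = r2 sa + γ * ∑ s', p sa s' * V2 s')
    (Dπ : Matrix (S × A1 × A2) (S × A1 × A2) ℝ)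
    (hD : Dπ = 1 + γ • (P * (1 - γ • Gπ)⁻¹ * Bπ)) :
    ((∀ s : S, ∀ a2 : A2, ∑ a1, π1 s a1 * Q2 (s, a1, a2) ≤ V2 s) ∧
     (∀ s : S, ∀ a1 : A1, ∑ a2, π2 s a2 * Q1 (s, a1, a2) ≤ V1 s) ∧
     (∀ s : S, ∀ a2 : A2, V1 s ≤ ∑ a1, π1 s a1 * Q1 (s, a1, a2)) ∧
     (∀ s : S, ∀ a1 : A1, V2 s ≤ ∑ a2, π2 s a2 * Q2 (s, a1, a2)))
      ↔
    ((∀ a1 : A1, ∀ s : S, (((Bπa1 a1 - Bπ) * Dπ) *ᵥ r1) s ≤ 0) ∧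
     (∀ a2 : A2, ∀ s : S, (((Bπa2 a2 - Bπ) * Dπ) *ᵥ r2) s ≤ 0) ∧
     (∀ a1 : A1, ∀ s : S, 0 ≤ (((Bπa1 a1 - Bπ) * Dπ) *ᵥ r2) s) ∧
     (∀ a2 : A2, ∀ s : S, 0 ≤ (((Bπa2 a2 - Bπ) * Dπ) *ᵥ r1) s)) := by
  have hGBP : Gπ = Bπ * P := by rw [hG, hB, hP]; exact (expectedReward_mul_of π1 π2 p).symm
  have hM : IsUnit (1 - γ • (Bπ * P)).det := by
    rw [← isUnit_iff_isUnit_det, ← hGBP, hG]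
    exact isUnit_one_sub_smul_of_mem_rowStochastic
      (stateTransition_mem_rowStochastic hp0 hp1 hπ10 hπ11 hπ20 hπ21)
      (abs_lt.2 ⟨by linarith, hγ1⟩)
  rw [hGBP] at hV1 hV2 hD
  have hQ_eq {r : S × A1 × A2 → ℝ} {V Q}
      (hQ : ∀ sa, Q sa = r sa + γ * ∑ s', p sa s' * V s') : Q = r + γ • P *ᵥ V :=
    funext fun sa => by simp [hQ sa, hP, mulVec, dotProduct]
  have hBa1' : ∀ a1, Bπa1 a1 = expectedRewardFst π2 a1 := hBa1
  have hBa2' : ∀ a2, Bπa2 a2 = expectedRewardSnd π1 a2 := hBa2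
  simp only [sub_mul_mulVec_eq_mulVec_sub hM hD hV1 (hQ_eq hQ1),
    sub_mul_mulVec_eq_mulVec_sub hM hD hV2 (hQ_eq hQ2), Pi.sub_apply, hBa1', hBa2',
    expectedRewardFst_mulVec_apply, expectedRewardSnd_mulVec_apply, sub_nonpos, sub_nonneg,
    forall_comm (α := S)]
  constructor <;> rintro ⟨h1, h2, h3, h4⟩ <;> exact ⟨h2, h1, h4, h3⟩
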